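/- With the same setup but where instead all even-indexed rows â_{2ν1,ν2} (ν1 = -n/2,...,n/2-1) are acquired: (a) for k1 ∈ {0,...,n-1}, k2 ∈ {-m,...,m-1}, a_{k1,k2} + a_{k1-n,k2} = (2/√(MN)) Σ_{ν1=-n/2}^{n/2-1} Σ_{ν2=-m}^{m-1} â_{2ν1,ν2} ω_N^{-2k1ν1} ω_M^{-k2ν2}; and (b) every interpolation scheme of the form ã̂_{2ν1+1,ν2} := Σ_{ℓ1,ℓ2} w_{ν1-ℓ1,ν2-ℓ2} â_{2ℓ1,ℓ2} produces a reconstruction Ã with ã_{k1,k2} = (1/2)(1 + ω_N^{-k1} w̌_{k1,k2})(a_{k1,k2} + a_{k1-n,k2}) for all k1 ∈ {0,...,n-1}, k2 ∈ {-m,...,m-1}. -/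

import Mathlib

open Finset

noncomputable def omegaRoot (N : ℤ) : ℂ :=
  Complex.exp (-2 * Real.pi * Complex.I / N)

lemma omegaRoot_ne_zero (N : ℤ) : omegaRoot N ≠ 0 := Complex.exp_ne_zero _

lemma omegaRoot_zpow (N k : ℤ) :
    omegaRoot N ^ k = Complex.exp (k * (-2 * Real.pi * Complex.I / N)) := by
  rw [omegaRoot, ← Complex.exp_int_mul]

lemma omegaRoot_zpow_eq_one_iff (N : ℤ) (hN : N ≠ 0) (k : ℤ) :
    omegaRoot N ^ k = 1 ↔ N ∣ k := by
  have hNc : (N : ℂ) ≠ 0 := Int.cast_ne_zero.mpr hN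
  have hpi : (Real.pi : ℂ) ≠ 0 := by exact_mod_cast Real.pi_ne_zero
  have h2 : (2 : ℂ) * Real.pi * Complex.I ≠ 0 := by
    simp [hpi, Complex.I_ne_zero]
  rw [omegaRoot_zpow, Complex.exp_eq_one_iff]
  constructor
  · rintro ⟨j, hj⟩
    field_simp at hj
    have h3 : (k : ℂ) * (2 * Real.pi * Complex.I) = ((N * -j : ℤ) : ℂ) * (2 * Real.pi * Complex.I) := by
      push_cast
      linear_combination -(2 * Real.pi * Complex.I) * hj
    have h4 : (k : ℂ) = ((N * -j : ℤ) : ℂ) := mul_right_cancel₀ h2 h3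
    exact ⟨-j, by exact_mod_cast h4⟩
  · rintro ⟨t, rfl⟩
    refine ⟨-t, ?_⟩
    push_cast
    field_simp

lemma periodic_full (L : ℤ) (f : ℤ → ℂ) (hf : ∀ s, f (s + L) = f s) :
    ∀ (t : ℤ) (s : ℤ), f (s + t * L) = f s := by
  intro t
  induction t using Int.induction_on with
  | zero => simp
  | succ t ih => intro s; have := hf (s + t * L); rw [← ih s, ← this]; ring_nf
  | pred t ih => intro s
                 have h1 := hf (s + (-(t:ℤ) - 1) * L)
                 have h2 := ih s
                 rw [show s + (-(t:ℤ) - 1) * L + L = s + -(t:ℤ) * L by ring] at h1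
                 rw [← h2, ← h1]

lemma periodic_mod (L : ℤ) (f : ℤ → ℂ) (hf : ∀ s, f (s + L) = f s) (s : ℤ) :
    f s = f (s % L) := by
  conv_lhs => rw [show s = s % L + (s / L) * L by rw [mul_comm]; exact (Int.emod_add_mul_ediv s L).symm]
  exact periodic_full L f hf (s / L) (s % L)

lemma sum_periodic_window (L : ℤ) (hL : 0 < L) (f : ℤ → ℂ) (hf : ∀ s, f (s + L) = f s)
    (A : ℤ) : ∑ s ∈ Icc A (A + L - 1), f s = ∑ s ∈ Icc 0 (L - 1), f s := by
  refine Finset.sum_nbij' (fun s => s % L) (fun t => A + (t - A) % L) ?_ ?_ ?_ ?_ ?_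
  · intro s hs
    simp only [mem_Icc] at *
    have := Int.emod_nonneg s hL.ne'
    have := Int.emod_lt_of_pos s hL
    omega
  · intro t ht
    simp only [mem_Icc] at *
    have := Int.emod_nonneg (t - A) hL.ne'
    have := Int.emod_lt_of_pos (t - A) hL
    omega
  · intro s hs
    simp only [mem_Icc] at hs
    have h1 : (s % L - A) % L = (s - A) % L := by
      conv_rhs => rw [Int.sub_emod, ← Int.emod_emod_of_dvd s (dvd_refl L), ← Int.sub_emod]
    have h2 : (s - A) % L = s - A := Int.emod_eq_of_lt (by omega) (by omega)
    omega
  · intro t ht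
    simp only [mem_Icc] at ht
    have h1 : (A + (t - A) % L) % L = t % L := by
      conv_lhs => rw [Int.add_emod, Int.emod_emod_of_dvd (t-A) (dvd_refl L), ← Int.add_emod]
      ring_nf
    have h2 : t % L = t := Int.emod_eq_of_lt (by omega) (by omega)
    omega
  · intro s hs
    exact periodic_mod L f hf s

lemma sum_periodic_shift (L : ℤ) (hL : 0 < L) (f : ℤ → ℂ) (hf : ∀ s, f (s + L) = f s)
    (A ℓ : ℤ) : ∑ s ∈ Icc A (A + L - 1), f (s - ℓ) = ∑ s ∈ Icc A (A + L - 1), f s := by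
  have h1 : ∑ s ∈ Icc A (A + L - 1), f (s - ℓ) = ∑ s ∈ Icc (A - ℓ) (A - ℓ + L - 1), f s := by
    refine Finset.sum_nbij' (fun s => s - ℓ) (fun s => s + ℓ) ?_ ?_ ?_ ?_ ?_
    · intro s hs; simp only [mem_Icc] at *; omega
    · intro s hs; simp only [mem_Icc] at *; omega
    · intro s hs; omega
    · intro s hs; omega
    · intro s hs; rfl
  rw [h1, sum_periodic_window L hL f hf, sum_periodic_window L hL f hf A]

lemma geom_window (L : ℤ) (hL : 0 < L) (ζ : ℂ) (h0 : ζ ≠ 0) (h1 : ζ ^ L = 1) :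
    ∑ s ∈ Icc (0:ℤ) (L - 1), ζ ^ s = if ζ = 1 then (L : ℂ) else 0 := by
  have hcount : ∑ s ∈ Icc (0:ℤ) (L-1), ζ ^ s = ∑ j ∈ Finset.range L.toNat, ζ ^ (j : ℕ) := by
    refine Finset.sum_nbij' (fun s => s.toNat) (fun j => (j : ℤ)) ?_ ?_ ?_ ?_ ?_
    · intro s hs; simp only [mem_Icc] at hs; simp only [Finset.mem_range]; omega
    · intro j hj; simp only [Finset.mem_range] at hj; simp only [mem_Icc]; omega
    · intro s hs; simp only [mem_Icc] at hs; omega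
    · intro j hj; omega
    · intro s hs; simp only [mem_Icc] at hs
      rw [← zpow_natCast, Int.toNat_of_nonneg hs.1]
  rw [hcount]
  by_cases hz1 : ζ = 1
  · simp only [hz1, if_true, one_pow, Finset.sum_const, Finset.card_range, nsmul_eq_mul, mul_one]
    exact_mod_cast congrArg (fun z : ℤ => (z : ℂ)) (Int.toNat_of_nonneg hL.le)
  · simp only [hz1, if_false]
    rw [geom_sum_eq hz1]
    have : ζ ^ (L.toNat : ℕ) = 1 := by
      rw [← zpow_natCast, Int.toNat_of_nonneg hL.le, h1]
    rw [this]
    simp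

lemma geom_window' (L : ℤ) (hL : 0 < L) (ζ : ℂ) (h0 : ζ ≠ 0) (h1 : ζ ^ L = 1) (A : ℤ) :
    ∑ s ∈ Icc A (A + L - 1), ζ ^ s = if ζ = 1 then (L : ℂ) else 0 := by
  rw [sum_periodic_window L hL (fun s => ζ ^ s)
    (fun s => by show ζ ^ (s + L) = ζ ^ s; rw [zpow_add₀ h0, h1, mul_one]) A,
    geom_window L hL ζ h0 h1]

lemma sum_even_odd (p : ℤ) (h : ℤ → ℂ) :
    ∑ s ∈ Icc (-(2*p)) (2*p-1), h s
      = ∑ μ ∈ Icc (-p) (p-1), h (2*μ) + ∑ μ ∈ Icc (-p) (p-1), h (2*μ+1) := by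
  rw [← Finset.sum_filter_add_sum_filter_not (Icc (-(2*p)) (2*p-1)) (fun s => s % 2 = 0) h]
  congr 1
  · refine Finset.sum_nbij' (fun s => s / 2) (fun μ => 2*μ) ?_ ?_ ?_ ?_ ?_
    · intro s hs; simp only [Finset.mem_filter, mem_Icc] at hs ⊢; omega
    · intro μ hμ; simp only [Finset.mem_filter, mem_Icc] at hμ ⊢; omega
    · intro s hs; simp only [Finset.mem_filter, mem_Icc] at hs; show 2 * (s/2) = s; omega
    · intro μ hμ; simp only [Finset.mem_filter, mem_Icc] at hμ; show (2*μ)/2 = μ; omega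
    · intro s hs; simp only [Finset.mem_filter, mem_Icc] at hs
      exact congrArg h (show s = 2 * (s/2) by omega)
  · refine Finset.sum_nbij' (fun s => s / 2) (fun μ => 2*μ+1) ?_ ?_ ?_ ?_ ?_
    · intro s hs; simp only [Finset.mem_filter, mem_Icc] at hs ⊢; omega
    · intro μ hμ; simp only [Finset.mem_filter, mem_Icc] at hμ ⊢; omega
    · intro s hs; simp only [Finset.mem_filter, mem_Icc] at hs; show 2 * (s/2) + 1 = s; omega
    · intro μ hμ; simp only [Finset.mem_filter, mem_Icc] at hμ; show (2*μ+1)/2 = μ; omega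
    · intro s hs; simp only [Finset.mem_filter, mem_Icc] at hs
      exact congrArg h (show s = 2 * (s/2) + 1 by omega)

lemma swap4 (A B C D : Finset ℤ) (t : ℤ → ℤ → ℤ → ℤ → ℂ) :
    (∑ a ∈ A, ∑ b ∈ B, ∑ c ∈ C, ∑ d ∈ D, t a b c d)
      = ∑ c ∈ C, ∑ d ∈ D, ∑ a ∈ A, ∑ b ∈ B, t a b c d := by
  have step1 : ∀ (f : ℤ → ℤ → ℤ → ℂ),
      (∑ b ∈ B, ∑ c ∈ C, ∑ d ∈ D, f b c d) = ∑ c ∈ C, ∑ d ∈ D, ∑ b ∈ B, f b c d := by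
    intro f
    rw [Finset.sum_comm]
    exact Finset.sum_congr rfl fun c _ => Finset.sum_comm
  calc (∑ a ∈ A, ∑ b ∈ B, ∑ c ∈ C, ∑ d ∈ D, t a b c d)
      = ∑ a ∈ A, ∑ c ∈ C, ∑ d ∈ D, ∑ b ∈ B, t a b c d :=
        Finset.sum_congr rfl fun a _ => step1 (t a)
    _ = ∑ c ∈ C, ∑ a ∈ A, ∑ d ∈ D, ∑ b ∈ B, t a b c d := Finset.sum_comm
    _ = ∑ c ∈ C, ∑ d ∈ D, ∑ a ∈ A, ∑ b ∈ B, t a b c d :=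
        Finset.sum_congr rfl fun c _ => Finset.sum_comm

lemma sep (I J : Finset ℤ) (b : ℂ) (f g : ℤ → ℂ) :
    ∑ x ∈ I, ∑ y ∈ J, b * (f x * g y) = b * ((∑ x ∈ I, f x) * (∑ y ∈ J, g y)) := by
  rw [Finset.sum_mul_sum, Finset.mul_sum]
  exact Finset.sum_congr rfl fun x _ => by rw [Finset.mul_sum]

lemma bdd_dvd (L x : ℤ) (hL : 0 < L) (h1 : -L < x) (h2 : x < L) (hd : L ∣ x) : x = 0 := by
  rcases hd with ⟨t, rfl⟩
  rcases lt_trichotomy t 0 with h | h | h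
  · nlinarith
  · simp [h]
  · nlinarith

lemma sum_shift_Icc (m : ℤ) (hm : 0 < m) (f : ℤ → ℂ) (hf : ∀ s, f (s + 2*m) = f s) (ℓ : ℤ) :
    ∑ s ∈ Icc (-m) (m-1), f (s - ℓ) = ∑ s ∈ Icc (-m) (m-1), f s := by
  have h := sum_periodic_shift (2*m) (by omega) f hf (-m) ℓ
  rw [show -m + 2*m - 1 = m - 1 by ring] at h
  exact h

/-- if all even-indexed rows of the centered 2D DFT are acquired, then
(a) the sums `a k1 k2 + a (k1-n) k2` are determined by these rows, and
(b) any local interpolation of the odd-indexed rows with weights `w` yields a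
reconstruction `atil` with
`atil k1 k2 = (1/2)(1 + ω_N^{-k1} w̌_{k1,k2})(a k1 k2 + a (k1-n) k2)`. -/
theorem interpolation_from_even_rows
    (n m : ℤ) (hn : 0 < n) (hm : 0 < m) (hne : Even n)
    (a ahat : ℤ → ℤ → ℂ)
    (hhat : ∀ ν1 ν2 : ℤ, ahat ν1 ν2 =
      (1 / Real.sqrt ((2 * m) * (2 * n)) : ℝ) *
        ∑ k1 ∈ Finset.Icc (-n) (n - 1), ∑ k2 ∈ Finset.Icc (-m) (m - 1),
          a k1 k2 * omegaRoot (2 * n) ^ (k1 * ν1) * omegaRoot (2 * m) ^ (k2 * ν2))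
    (w : ℤ → ℤ → ℂ)
    (hper : ∀ ν1 ν2 ℓ1 ℓ2 : ℤ, w (ν1 + ℓ1 * n) (ν2 + ℓ2 * (2 * m)) = w ν1 ν2)
    (atilhat : ℤ → ℤ → ℂ)
    (heven : ∀ ν1 ν2 : ℤ, atilhat (2 * ν1) ν2 = ahat (2 * ν1) ν2)
    (hodd : ∀ ν1 ν2 : ℤ, atilhat (2 * ν1 + 1) ν2 =
      ∑ ℓ1 ∈ Finset.Icc (-(n / 2)) (n / 2 - 1), ∑ ℓ2 ∈ Finset.Icc (-m) (m - 1),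
        w (ν1 - ℓ1) (ν2 - ℓ2) * ahat (2 * ℓ1) ℓ2)
    (atil : ℤ → ℤ → ℂ)
    (hinv : ∀ k1 k2 : ℤ, atil k1 k2 =
      (1 / Real.sqrt ((2 * m) * (2 * n)) : ℝ) *
        ∑ ν1 ∈ Finset.Icc (-n) (n - 1), ∑ ν2 ∈ Finset.Icc (-m) (m - 1),
          atilhat ν1 ν2 * omegaRoot (2 * n) ^ (-(k1 * ν1)) * omegaRoot (2 * m) ^ (-(k2 * ν2)))
    (wcheck : ℤ → ℤ → ℂ)
    (hwcheck : ∀ k1 k2 : ℤ, wcheck k1 k2 =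
      ∑ ν1 ∈ Finset.Icc (-(n / 2)) (n / 2 - 1), ∑ ν2 ∈ Finset.Icc (-m) (m - 1),
        w ν1 ν2 * omegaRoot (2 * n) ^ (-(2 * k1 * ν1)) * omegaRoot (2 * m) ^ (-(k2 * ν2))) :
    ∀ k1 ∈ Finset.Icc (0 : ℤ) (n - 1), ∀ k2 ∈ Finset.Icc (-m) (m - 1),
      (a k1 k2 + a (k1 - n) k2 =
        (2 / Real.sqrt ((2 * m) * (2 * n)) : ℝ) *
          ∑ ν1 ∈ Finset.Icc (-(n / 2)) (n / 2 - 1), ∑ ν2 ∈ Finset.Icc (-m) (m - 1),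
            ahat (2 * ν1) ν2 * omegaRoot (2 * n) ^ (-(2 * k1 * ν1))
              * omegaRoot (2 * m) ^ (-(k2 * ν2)))
      ∧ atil k1 k2 =
          (1 / 2 : ℂ) * (1 + omegaRoot (2 * n) ^ (-k1) * wcheck k1 k2) *
            (a k1 k2 + a (k1 - n) k2) := by
  intro k1 hk1 k2 hk2
  simp only [Finset.mem_Icc] at hk1 hk2
  obtain ⟨p, hp⟩ := hne
  have hn2p : n = 2 * p := by omega
  have hppos : 0 < p := by omega
  have hnd2 : n / 2 = p := by omega
  set ω1 := omegaRoot (2 * n) with hω1def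
  set ω2 := omegaRoot (2 * m) with hω2def
  have hω1 : ω1 ≠ 0 := omegaRoot_ne_zero _
  have hω2 : ω2 ≠ 0 := omegaRoot_ne_zero _
  have hNne : (2 * n : ℤ) ≠ 0 := by omega
  have hMne : (2 * m : ℤ) ≠ 0 := by omega
  have hroot1 : ω1 ^ (2 * n) = 1 := (omegaRoot_zpow_eq_one_iff _ hNne _).mpr dvd_rfl
  have hroot2 : ω2 ^ (2 * m) = 1 := (omegaRoot_zpow_eq_one_iff _ hMne _).mpr dvd_rfl
  set r : ℝ := Real.sqrt (2 * (m : ℝ) * (2 * (n : ℝ))) with hrdef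
  have hprodpos : (0 : ℝ) < 2 * (m : ℝ) * (2 * (n : ℝ)) := by
    have hm' : (0 : ℝ) < m := by exact_mod_cast hm
    have hn' : (0 : ℝ) < n := by exact_mod_cast hn
    nlinarith
  have hrpos : 0 < r := Real.sqrt_pos.mpr hprodpos
  have hr2 : r * r = 2 * (m : ℝ) * (2 * (n : ℝ)) := Real.mul_self_sqrt hprodpos.le
  -- kernels
  have ker1 : ∀ d : ℤ, ∑ ν ∈ Icc (-p) (p - 1), ω1 ^ (2 * d * ν)
      = if n ∣ d then (n : ℂ) else 0 := by
    intro d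
    have h1 : ∀ ν : ℤ, ω1 ^ (2 * d * ν) = (ω1 ^ (2 * d)) ^ ν := fun ν => zpow_mul ω1 (2 * d) ν
    simp only [h1]
    have hz0 : ω1 ^ (2 * d) ≠ 0 := zpow_ne_zero _ hω1
    have hzL : (ω1 ^ (2 * d)) ^ n = 1 := by
      rw [← zpow_mul, show 2 * d * n = (2 * n) * d by ring, zpow_mul, hroot1, one_zpow]
    have hgeo := geom_window' n hn (ω1 ^ (2 * d)) hz0 hzL (-p)
    rw [show -p + n - 1 = p - 1 by omega] at hgeo
    rw [hgeo]
    have hiff : ω1 ^ (2 * d) = 1 ↔ n ∣ d := by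
      rw [hω1def, omegaRoot_zpow_eq_one_iff _ hNne]
      constructor
      · rintro ⟨t, ht⟩
        refine ⟨t, ?_⟩
        have h2 : 2 * d = 2 * (n * t) := by linear_combination ht
        omega
      · rintro ⟨t, rfl⟩; exact ⟨t, by ring⟩
    simp only [hiff]
  have ker2 : ∀ d : ℤ, ∑ ν ∈ Icc (-m) (m - 1), ω2 ^ (d * ν)
      = if (2 * m) ∣ d then ((2 * m : ℤ) : ℂ) else 0 := by
    intro d
    have h1 : ∀ ν : ℤ, ω2 ^ (d * ν) = (ω2 ^ d) ^ ν := fun ν => zpow_mul ω2 d ν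
    simp only [h1]
    have hz0 : ω2 ^ d ≠ 0 := zpow_ne_zero _ hω2
    have hzL : (ω2 ^ d) ^ (2 * m) = 1 := by
      rw [← zpow_mul, show d * (2 * m) = (2 * m) * d by ring, zpow_mul, hroot2, one_zpow]
    have hgeo := geom_window' (2 * m) (by omega) (ω2 ^ d) hz0 hzL (-m)
    rw [show -m + 2 * m - 1 = m - 1 by omega] at hgeo
    rw [hgeo]
    have hiff : ω2 ^ d = 1 ↔ (2 * m) ∣ d := by
      rw [hω2def, omegaRoot_zpow_eq_one_iff _ hMne]
    simp only [hiff]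
  -- the key identity
  have keyA : (∑ ν1 ∈ Icc (-p) (p - 1), ∑ ν2 ∈ Icc (-m) (m - 1),
        ahat (2 * ν1) ν2 * ω1 ^ (-(2 * k1 * ν1)) * ω2 ^ (-(k2 * ν2)))
      = ((1 / r : ℝ) : ℂ) * ((n : ℂ) * ((2 * m : ℤ) : ℂ)) * (a k1 k2 + a (k1 - n) k2) := by
    calc (∑ ν1 ∈ Icc (-p) (p - 1), ∑ ν2 ∈ Icc (-m) (m - 1),
          ahat (2 * ν1) ν2 * ω1 ^ (-(2 * k1 * ν1)) * ω2 ^ (-(k2 * ν2)))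
        = ∑ ν1 ∈ Icc (-p) (p - 1), ∑ ν2 ∈ Icc (-m) (m - 1),
            ∑ j1 ∈ Icc (-n) (n - 1), ∑ j2 ∈ Icc (-m) (m - 1),
              (((1 / r : ℝ) : ℂ) * a j1 j2) *
                (ω1 ^ (2 * (j1 - k1) * ν1) * ω2 ^ ((j2 - k2) * ν2)) := by
          refine Finset.sum_congr rfl fun ν1 _ => Finset.sum_congr rfl fun ν2 _ => ?_
          rw [hhat]
          simp only [Finset.sum_mul, Finset.mul_sum]
          refine Finset.sum_congr rfl fun j1 _ => Finset.sum_congr rfl fun j2 _ => ?_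
          rw [show 2 * (j1 - k1) * ν1 = j1 * (2 * ν1) + -(2 * k1 * ν1) by ring,
              show (j2 - k2) * ν2 = j2 * ν2 + -(k2 * ν2) by ring,
              zpow_add₀ hω1, zpow_add₀ hω2]
          ring
      _ = ∑ j1 ∈ Icc (-n) (n - 1), ∑ j2 ∈ Icc (-m) (m - 1),
            ∑ ν1 ∈ Icc (-p) (p - 1), ∑ ν2 ∈ Icc (-m) (m - 1),
              (((1 / r : ℝ) : ℂ) * a j1 j2) *
                (ω1 ^ (2 * (j1 - k1) * ν1) * ω2 ^ ((j2 - k2) * ν2)) := by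
          exact swap4 _ _ _ _ _
      _ = ∑ j1 ∈ Icc (-n) (n - 1), ∑ j2 ∈ Icc (-m) (m - 1),
            (((1 / r : ℝ) : ℂ) * a j1 j2) *
              ((∑ ν1 ∈ Icc (-p) (p - 1), ω1 ^ (2 * (j1 - k1) * ν1)) *
               (∑ ν2 ∈ Icc (-m) (m - 1), ω2 ^ ((j2 - k2) * ν2))) := by
          exact Finset.sum_congr rfl fun j1 _ => Finset.sum_congr rfl fun j2 _ => sep _ _ _ _ _
      _ = ∑ j1 ∈ Icc (-n) (n - 1), ∑ j2 ∈ Icc (-m) (m - 1),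
            (((1 / r : ℝ) : ℂ) * a j1 j2) *
              ((if n ∣ j1 - k1 then (n : ℂ) else 0) *
               (if (2 * m) ∣ j2 - k2 then ((2 * m : ℤ) : ℂ) else 0)) := by
          refine Finset.sum_congr rfl fun j1 _ => Finset.sum_congr rfl fun j2 _ => ?_
          rw [ker1 (j1 - k1), ker2 (j2 - k2)]
      _ = ∑ j1 ∈ Icc (-n) (n - 1),
            (((1 / r : ℝ) : ℂ) * a j1 k2) *
              ((if n ∣ j1 - k1 then (n : ℂ) else 0) * ((2 * m : ℤ) : ℂ)) := by
          refine Finset.sum_congr rfl fun j1 _ => ?_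
          rw [Finset.sum_eq_single_of_mem k2 (by simp only [mem_Icc]; omega)]
          · simp
          · intro j2 hj2 hnej2
            simp only [mem_Icc] at hj2
            have hnd : ¬ (2 * m) ∣ (j2 - k2) := by
              intro hd
              have := bdd_dvd (2 * m) (j2 - k2) (by omega) (by omega) (by omega) hd
              omega
            simp [hnd]
      _ = (((1 / r : ℝ) : ℂ) * a k1 k2) * ((n : ℂ) * ((2 * m : ℤ) : ℂ))
          + (((1 / r : ℝ) : ℂ) * a (k1 - n) k2) * ((n : ℂ) * ((2 * m : ℤ) : ℂ)) := by
          have hsub : ({k1, k1 - n} : Finset ℤ) ⊆ Icc (-n) (n - 1) := by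
            intro x hx
            simp only [Finset.mem_insert, Finset.mem_singleton] at hx
            simp only [mem_Icc]
            rcases hx with rfl | rfl <;> omega
          have hzero : ∀ j1 ∈ Icc (-n) (n - 1), j1 ∉ ({k1, k1 - n} : Finset ℤ) →
              (((1 / r : ℝ) : ℂ) * a j1 k2) *
                ((if n ∣ j1 - k1 then (n : ℂ) else 0) * ((2 * m : ℤ) : ℂ)) = 0 := by
            intro j1 hj1 hj1ne
            simp only [mem_Icc] at hj1
            simp only [Finset.mem_insert, Finset.mem_singleton, not_or] at hj1ne
            have hndvd : ¬ n ∣ (j1 - k1) := by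
              rintro ⟨t, ht⟩
              have ht1 : t < 1 := by nlinarith
              have ht2 : -2 < t := by nlinarith
              interval_cases t <;> omega
            simp [hndvd]
          rw [← Finset.sum_subset hsub hzero,
            Finset.sum_pair (show k1 ≠ k1 - n by omega)]
          have hd1 : n ∣ (k1 - k1) := by simp
          have hd2 : n ∣ (k1 - n - k1) := ⟨-1, by ring⟩
          rw [if_pos hd1, if_pos hd2]
      _ = ((1 / r : ℝ) : ℂ) * ((n : ℂ) * ((2 * m : ℤ) : ℂ)) * (a k1 k2 + a (k1 - n) k2) := by
          ring
  -- scalar identities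
  have htwoC : ((2 / r : ℝ) : ℂ) * (((1 / r : ℝ) : ℂ) * ((n : ℂ) * ((2 * m : ℤ) : ℂ))) = 1 := by
    have hre : (2 / r) * ((1 / r) * ((n : ℝ) * ((2 * m : ℤ) : ℝ))) = 1 := by
      field_simp
      push_cast
      nlinarith [hr2]
    calc ((2 / r : ℝ) : ℂ) * (((1 / r : ℝ) : ℂ) * ((n : ℂ) * ((2 * m : ℤ) : ℂ)))
        = (((2 / r) * ((1 / r) * ((n : ℝ) * ((2 * m : ℤ) : ℝ))) : ℝ) : ℂ) := by push_cast; ring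
      _ = 1 := by rw [hre]; norm_num
  have hhalfC : ((1 / r : ℝ) : ℂ) * (((1 / r : ℝ) : ℂ) * ((n : ℂ) * ((2 * m : ℤ) : ℂ)))
      = 1 / 2 := by
    have hre : (1 / r) * ((1 / r) * ((n : ℝ) * ((2 * m : ℤ) : ℝ))) = 1 / 2 := by
      field_simp
      push_cast
      nlinarith [hr2]
    calc ((1 / r : ℝ) : ℂ) * (((1 / r : ℝ) : ℂ) * ((n : ℂ) * ((2 * m : ℤ) : ℂ)))
        = (((1 / r) * ((1 / r) * ((n : ℝ) * ((2 * m : ℤ) : ℝ))) : ℝ) : ℂ) := by push_cast; ring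
      _ = 1 / 2 := by rw [hre]; norm_num
  constructor
  · -- part (a)
    rw [hnd2, keyA]
    linear_combination (-(a k1 k2 + a (k1 - n) k2)) * htwoC
  · -- part (b)
    rw [hinv k1 k2]
    rw [show (-n : ℤ) = -(2 * p) by omega, show (n - 1 : ℤ) = 2 * p - 1 by omega]
    rw [sum_even_odd p (fun ν1 => ∑ ν2 ∈ Finset.Icc (-m) (m - 1),
      atilhat ν1 ν2 * ω1 ^ (-(k1 * ν1)) * ω2 ^ (-(k2 * ν2)))]
    have hE : (∑ μ ∈ Icc (-p) (p - 1), ∑ ν2 ∈ Icc (-m) (m - 1),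
          atilhat (2 * μ) ν2 * ω1 ^ (-(k1 * (2 * μ))) * ω2 ^ (-(k2 * ν2)))
        = ((1 / r : ℝ) : ℂ) * ((n : ℂ) * ((2 * m : ℤ) : ℂ)) * (a k1 k2 + a (k1 - n) k2) := by
      rw [← keyA]
      refine Finset.sum_congr rfl fun μ _ => Finset.sum_congr rfl fun ν2 _ => ?_
      rw [heven, show -(k1 * (2 * μ)) = -(2 * k1 * μ) by ring]
    have hwshape : (∑ μ ∈ Icc (-p) (p - 1), ∑ ν2 ∈ Icc (-m) (m - 1),
          w μ ν2 * ω1 ^ (-(2 * k1 * μ)) * ω2 ^ (-(k2 * ν2))) = wcheck k1 k2 := by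
      rw [hwcheck, hnd2]
    have hO : (∑ μ ∈ Icc (-p) (p - 1), ∑ ν2 ∈ Icc (-m) (m - 1),
          atilhat (2 * μ + 1) ν2 * ω1 ^ (-(k1 * (2 * μ + 1))) * ω2 ^ (-(k2 * ν2)))
        = ω1 ^ (-k1) * wcheck k1 k2 *
            (((1 / r : ℝ) : ℂ) * ((n : ℂ) * ((2 * m : ℤ) : ℂ)) * (a k1 k2 + a (k1 - n) k2)) := by
      have hFshift : ∀ ℓ1 ℓ2 : ℤ,
          (∑ μ ∈ Icc (-p) (p - 1), ∑ ν2 ∈ Icc (-m) (m - 1),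
            w (μ - ℓ1) (ν2 - ℓ2) * ω1 ^ (-(2 * k1 * (μ - ℓ1))) * ω2 ^ (-(k2 * (ν2 - ℓ2))))
          = wcheck k1 k2 := by
        intro ℓ1 ℓ2
        have hcol : ∀ s : ℤ,
            (∑ ν2 ∈ Icc (-m) (m - 1),
              w s (ν2 - ℓ2) * ω1 ^ (-(2 * k1 * s)) * ω2 ^ (-(k2 * (ν2 - ℓ2))))
            = ∑ ν2 ∈ Icc (-m) (m - 1),
              w s ν2 * ω1 ^ (-(2 * k1 * s)) * ω2 ^ (-(k2 * ν2)) := by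
          intro s
          refine sum_shift_Icc m hm (fun t => w s t * ω1 ^ (-(2 * k1 * s)) * ω2 ^ (-(k2 * t))) ?_ ℓ2
          intro t
          show w s (t + 2 * m) * ω1 ^ (-(2 * k1 * s)) * ω2 ^ (-(k2 * (t + 2 * m)))
            = w s t * ω1 ^ (-(2 * k1 * s)) * ω2 ^ (-(k2 * t))
          have hw := hper s t 0 1
          simp only [zero_mul, add_zero, one_mul] at hw
          rw [hw, show -(k2 * (t + 2 * m)) = -(k2 * t) + 2 * m * (-k2) by ring,
            zpow_add₀ hω2, zpow_mul, hroot2, one_zpow, mul_one]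
        calc (∑ μ ∈ Icc (-p) (p - 1), ∑ ν2 ∈ Icc (-m) (m - 1),
              w (μ - ℓ1) (ν2 - ℓ2) * ω1 ^ (-(2 * k1 * (μ - ℓ1))) * ω2 ^ (-(k2 * (ν2 - ℓ2))))
            = ∑ μ ∈ Icc (-p) (p - 1), ∑ ν2 ∈ Icc (-m) (m - 1),
              w (μ - ℓ1) ν2 * ω1 ^ (-(2 * k1 * (μ - ℓ1))) * ω2 ^ (-(k2 * ν2)) :=
              Finset.sum_congr rfl fun μ _ => hcol (μ - ℓ1)
          _ = ∑ μ ∈ Icc (-p) (p - 1), ∑ ν2 ∈ Icc (-m) (m - 1),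
              w μ ν2 * ω1 ^ (-(2 * k1 * μ)) * ω2 ^ (-(k2 * ν2)) := by
              refine sum_shift_Icc p hppos (fun s => ∑ ν2 ∈ Icc (-m) (m - 1),
                w s ν2 * ω1 ^ (-(2 * k1 * s)) * ω2 ^ (-(k2 * ν2))) ?_ ℓ1
              intro s
              show (∑ ν2 ∈ Icc (-m) (m - 1),
                  w (s + 2 * p) ν2 * ω1 ^ (-(2 * k1 * (s + 2 * p))) * ω2 ^ (-(k2 * ν2)))
                = ∑ ν2 ∈ Icc (-m) (m - 1),
                  w s ν2 * ω1 ^ (-(2 * k1 * s)) * ω2 ^ (-(k2 * ν2))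
              refine Finset.sum_congr rfl fun ν2 _ => ?_
              have hw := hper s ν2 1 0
              simp only [zero_mul, add_zero, one_mul] at hw
              rw [← hn2p] at *
              rw [hw, show -(2 * k1 * (s + n)) = -(2 * k1 * s) + 2 * n * (-k1) by ring,
                zpow_add₀ hω1, zpow_mul, hroot1, one_zpow, mul_one]
          _ = wcheck k1 k2 := hwshape
      calc (∑ μ ∈ Icc (-p) (p - 1), ∑ ν2 ∈ Icc (-m) (m - 1),
            atilhat (2 * μ + 1) ν2 * ω1 ^ (-(k1 * (2 * μ + 1))) * ω2 ^ (-(k2 * ν2)))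
          = ∑ μ ∈ Icc (-p) (p - 1), ∑ ν2 ∈ Icc (-m) (m - 1),
              ∑ ℓ1 ∈ Icc (-p) (p - 1), ∑ ℓ2 ∈ Icc (-m) (m - 1),
                (ahat (2 * ℓ1) ℓ2 * ω1 ^ (-(2 * k1 * ℓ1)) * ω2 ^ (-(k2 * ℓ2))) *
                (ω1 ^ (-k1) *
                  (w (μ - ℓ1) (ν2 - ℓ2) * ω1 ^ (-(2 * k1 * (μ - ℓ1))) *
                    ω2 ^ (-(k2 * (ν2 - ℓ2))))) := by
            refine Finset.sum_congr rfl fun μ _ => Finset.sum_congr rfl fun ν2 _ => ?_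
            rw [hodd, hnd2]
            simp only [Finset.sum_mul]
            refine Finset.sum_congr rfl fun ℓ1 _ => Finset.sum_congr rfl fun ℓ2 _ => ?_
            rw [show -(k1 * (2 * μ + 1)) = -(2 * k1 * ℓ1) + (-k1 + -(2 * k1 * (μ - ℓ1))) by ring,
              show -(k2 * ν2) = -(k2 * ℓ2) + -(k2 * (ν2 - ℓ2)) by ring,
              zpow_add₀ hω1, zpow_add₀ hω1, zpow_add₀ hω2]
            ring
        _ = ∑ ℓ1 ∈ Icc (-p) (p - 1), ∑ ℓ2 ∈ Icc (-m) (m - 1),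
              ∑ μ ∈ Icc (-p) (p - 1), ∑ ν2 ∈ Icc (-m) (m - 1),
                (ahat (2 * ℓ1) ℓ2 * ω1 ^ (-(2 * k1 * ℓ1)) * ω2 ^ (-(k2 * ℓ2))) *
                (ω1 ^ (-k1) *
                  (w (μ - ℓ1) (ν2 - ℓ2) * ω1 ^ (-(2 * k1 * (μ - ℓ1))) *
                    ω2 ^ (-(k2 * (ν2 - ℓ2))))) := swap4 _ _ _ _ _
        _ = ∑ ℓ1 ∈ Icc (-p) (p - 1), ∑ ℓ2 ∈ Icc (-m) (m - 1),
              (ahat (2 * ℓ1) ℓ2 * ω1 ^ (-(2 * k1 * ℓ1)) * ω2 ^ (-(k2 * ℓ2))) *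
                (ω1 ^ (-k1) * wcheck k1 k2) := by
            refine Finset.sum_congr rfl fun ℓ1 _ => Finset.sum_congr rfl fun ℓ2 _ => ?_
            simp only [← Finset.mul_sum]
            rw [hFshift ℓ1 ℓ2]
        _ = ω1 ^ (-k1) * wcheck k1 k2 *
              (((1 / r : ℝ) : ℂ) * ((n : ℂ) * ((2 * m : ℤ) : ℂ)) *
                (a k1 k2 + a (k1 - n) k2)) := by
            simp only [← Finset.sum_mul]
            rw [keyA]
            ring
    rw [hE, hO]
    have hfin := hhalfC
    linear_combination ((1 + ω1 ^ (-k1) * wcheck k1 k2) * (a k1 k2 + a (k1 - n) k2)) * hfin
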